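/- Let (W,S) be a Coxeter group and let {J_i} be a family of subsets of S. Then for x, y ∈ W, we have x^{J_i} ≤ y^{J_i} for all i if and only if x^{∩_i J_i} ≤ y^{∩_i J_i}. -/

import Mathlib

/-!
Write `K = ⋂ i, J_i`. Since `z^K` and `z` lie in the same `W_{J_i}`-coset, `(z^K)^{J_i} = z^{J_i}`,
and the backward implication is the monotonicity of `z ↦ z^J` for the Bruhat order.

For the forward implication take `x, y ∈ W^K` and induct on `ℓ(y)`. If `y = 1`, all `x^{J_i} = 1`,
so `x ∈ ⋂ W_{J_i} = W_K` and `x = 1`. Otherwise let `s` be a left descent of `y`, so `sy ∈ W^K`.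
Deodhar's lemma (`(sz)^J` is `s z^J` or `z^J`) and the lifting property of the Bruhat order give
`(sx)^{J_i} ≤ (sy)^{J_i}` for all `i` when `sx < x`, and `x^{J_i} ≤ (sy)^{J_i}` when `sx > x`. By
induction `sx ≤ sy`, resp. `x ≤ sy`, and lifting, resp. `sy ≤ y`, gives `x ≤ y`.

The identity `W_K = ⋂ W_{J_i}` holds because every reduced word of an element of `W_J` uses only
letters from `J`; this needs the strong exchange condition and the injectivity of `s`.
-/

namespace Paper

variable {B : Type*} {W : Type*} [Group W] {M : CoxeterMatrix B}

/-- One step in the Bruhat order: multiply on the right by a reflection, increasing length. -/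
def BruhatStep (cs : CoxeterSystem M W) (u v : W) : Prop :=
  ∃ t : W, cs.IsReflection t ∧ v = u * t ∧ cs.length u < cs.length v

/-- The Bruhat order on the Coxeter group `W`. -/
def BruhatLE (cs : CoxeterSystem M W) (u v : W) : Prop :=
  Relation.ReflTransGen (BruhatStep cs) u v

/-- Strict Bruhat order. -/
def BruhatLT (cs : CoxeterSystem M W) (u v : W) : Prop :=
  BruhatLE cs u v ∧ u ≠ v

/-- The standard parabolic subgroup `W_J` generated by the simple reflections in `J`. -/
def parabolic (cs : CoxeterSystem M W) (J : Set B) : Subgroup W :=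
  Subgroup.closure (cs.simple '' J)

/-- `m` is the minimal-length representative `x^J` of the coset `x W_J`. -/
def IsMinRep (cs : CoxeterSystem M W) (J : Set B) (x m : W) : Prop :=
  x⁻¹ * m ∈ parabolic cs J ∧
    ∀ y : W, x⁻¹ * y ∈ parabolic cs J → cs.length m ≤ cs.length y

end Paper

theorem iterate_skewProduct {X A : Type*} [AddCommMonoid A] (f : X → X) (g : X → A)
    (n : ℕ) (x : X) (a : A) :
    (fun p : X × A => (f p.1, p.2 + g p.1))^[n] (x, a) =
      (f^[n] x, a + ∑ k ∈ Finset.range n, g (f^[k] x)) := by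
  induction n with
  | zero => simp
  | succ n ih =>
    rw [Function.iterate_succ_apply', ih, Function.iterate_succ_apply', Finset.sum_range_succ,
      add_assoc]

theorem sum_range_pair_eq_zero_of_periodic {f : ℕ → ZMod 2} {m : ℕ}
    (hf : ∀ n, f (m + n) = f n) : ∑ k ∈ Finset.range m, (f (2 * k) + f (2 * k + 1)) = 0 := by
  have hpair (N : ℕ) : ∑ k ∈ Finset.range N, (f (2 * k) + f (2 * k + 1)) =
      ∑ n ∈ Finset.range (2 * N), f n := by
    induction N with
    | zero => simp
    | succ N ih => rw [Finset.sum_range_succ, ih, Nat.mul_succ, Finset.sum_range_succ,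
        Finset.sum_range_succ, add_assoc]
  rw [hpair, two_mul, Finset.sum_range_add]
  simp only [hf, CharTwo.add_self_eq_zero]

theorem conj_eq_iff {G : Type*} [Group G] (g t x : G) : g * t * g⁻¹ = x ↔ t = g⁻¹ * x * g := by
  constructor <;> rintro rfl <;> group

theorem iterate_conj {G : Type*} [Group G] (p t : G) (k : ℕ) :
    (fun u => p * u * p⁻¹)^[k] t = p ^ k * t * (p ^ k)⁻¹ := by
  induction k with
  | zero => simp
  | succ k ih => rw [Function.iterate_succ_apply', ih, pow_succ']; group

namespace CoxeterMatrix

variable {B : Type*} (M : CoxeterMatrix B)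

open Real Finsupp

/-- `v ↦ B(v, α_k)` for the bilinear form `B(α_p, α_k) = -cos (π / m_pk)` of the geometric
representation. For `m_pk = 0` (no relation) Lean's `π / 0 = 0` gives `-cos 0 = -1`, the value the
geometric representation prescribes for `m_pk = ∞`. -/
noncomputable def geomForm (k : B) : (B →₀ ℝ) →ₗ[ℝ] ℝ :=
  linearCombination ℝ fun p => -cos (π / M p k)

noncomputable def geomRefl (k : B) : Module.End ℝ (B →₀ ℝ) :=
  LinearMap.id - (2 : ℝ) • (M.geomForm k).smulRight (single k 1)

theorem geomForm_single (p k : B) : M.geomForm k (single p 1) = -cos (π / M p k) := by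
  simp [geomForm]

theorem geomForm_single_self (k : B) : M.geomForm k (single k 1) = 1 := by
  simp [geomForm_single]

theorem geomRefl_apply (k : B) (v : B →₀ ℝ) :
    M.geomRefl k v = v - (2 * M.geomForm k v) • single k 1 := by
  simp [geomRefl]

theorem geomRefl_apply_of_geomForm_eq_zero {k : B} {v : B →₀ ℝ} (hv : M.geomForm k v = 0) :
    M.geomRefl k v = v := by
  simp [geomRefl_apply, hv]

theorem geomRefl_mul_self (k : B) : M.geomRefl k * M.geomRefl k = 1 := by
  refine LinearMap.ext fun v => ?_
  simp only [Module.End.mul_apply, Module.End.one_apply, geomRefl_apply, map_sub, map_smul,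
    geomForm_single_self, mul_one]
  module

/-- These vectors span the plane of `α_k` and `α_l`; for integral `x` they are, up to the factor
`sin (π / m_kl)`, the roots of the dihedral subsystem. -/
noncomputable def dihedralVec (k l : B) (x : ℝ) : B →₀ ℝ :=
  sin (x * (π / M k l)) • single k 1 + sin ((x - 1) * (π / M k l)) • single l 1

theorem geomRefl_mul_geomRefl_dihedralVec (k l : B) (x : ℝ) :
    (M.geomRefl k * M.geomRefl l) (M.dihedralVec k l x) = M.dihedralVec k l (x + 2) := by
  set θ := π / M k l
  have hkl : M.geomForm k (single l 1) = -cos θ := by rw [geomForm_single, M.symmetric]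
  have hlk : M.geomForm l (single k 1) = -cos θ := geomForm_single M k l
  have hshift (y : ℝ) : sin ((y + 1) * θ) = 2 * cos θ * sin (y * θ) - sin ((y - 1) * θ) := by
    simp only [add_mul, sub_mul, one_mul, sin_add, sin_sub]
    ring
  have h1 := hshift x
  have h2 := hshift (x + 1)
  simp only [add_sub_cancel_right] at h1 h2
  simp only [dihedralVec, Module.End.mul_apply, geomRefl_apply, map_add, map_sub, map_smul,
    geomForm_single_self, hkl, hlk]
  rw [show x + 2 = x + 1 + 1 by ring, h2, h1, show x + 1 + 1 - 1 = x + 1 by ring, h1]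
  module

theorem geomRefl_mul_geomRefl_pow_dihedralVec (k l : B) (x : ℝ) :
    ((M.geomRefl k * M.geomRefl l) ^ M k l) (M.dihedralVec k l x) = M.dihedralVec k l x := by
  rcases Nat.eq_zero_or_pos (M k l) with h0 | hpos
  · rw [h0, pow_zero, Module.End.one_apply]
  have hiter (n : ℕ) : ((M.geomRefl k * M.geomRefl l) ^ n) (M.dihedralVec k l x) =
      M.dihedralVec k l (x + 2 * n) := by
    induction n with
    | zero => simp
    | succ n ih =>
      rw [pow_succ', Module.End.mul_apply, ih, geomRefl_mul_geomRefl_dihedralVec]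
      push_cast
      ring_nf
  have hperiod (y : ℝ) : sin ((y + 2 * (M k l : ℕ)) * (π / M k l)) = sin (y * (π / M k l)) := by
    rw [add_mul, mul_assoc, mul_div_cancel₀ _ (by positivity), mul_comm, sin_add_two_pi]
  rw [hiter]
  simp only [dihedralVec, add_sub_right_comm x, hperiod]

theorem sin_pi_div_ne_zero {k l : B} (hkl : k ≠ l) (hm : M k l ≠ 0) : sin (π / M k l) ≠ 0 := by
  have h2 : (2 : ℝ) ≤ M k l := by
    have := M.off_diagonal k l hkl
    exact_mod_cast (by omega : 2 ≤ M k l)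
  exact (sin_pos_of_pos_of_lt_pi (by positivity) (div_lt_self pi_pos (by linarith))).ne'

theorem geomRefl_mul_geomRefl_pow_apply_single {k l : B} (hkl : k ≠ l) (hm : M k l ≠ 0) :
    ((M.geomRefl k * M.geomRefl l) ^ M k l) (single k 1) = single k 1 ∧
      ((M.geomRefl k * M.geomRefl l) ^ M k l) (single l 1) = single l 1 := by
  have hθ := M.sin_pi_div_ne_zero hkl hm
  have h₁ := M.geomRefl_mul_geomRefl_pow_dihedralVec k l 1
  have h₀ := M.geomRefl_mul_geomRefl_pow_dihedralVec k l 0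
  simp only [dihedralVec, one_mul, sub_self, zero_mul, sin_zero, zero_smul, add_zero, zero_add,
    zero_sub, neg_one_mul, sin_neg, map_smul] at h₁ h₀
  exact ⟨smul_right_injective _ hθ h₁, smul_right_injective _ (neg_ne_zero.2 hθ) h₀⟩

theorem geomRefl_mul_geomRefl_pow {k l : B} (hkl : k ≠ l) (hm : M k l ≠ 0) :
    (M.geomRefl k * M.geomRefl l) ^ M k l = 1 := by
  obtain ⟨hk, hl⟩ := M.geomRefl_mul_geomRefl_pow_apply_single hkl hm
  have hperp {r : B →₀ ℝ} (hrk : M.geomForm k r = 0) (hrl : M.geomForm l r = 0) (n : ℕ) :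
      ((M.geomRefl k * M.geomRefl l) ^ n) r = r := by
    induction n with
    | zero => simp
    | succ n ih => rw [pow_succ', Module.End.mul_apply, ih, Module.End.mul_apply,
        geomRefl_apply_of_geomForm_eq_zero M hrl, geomRefl_apply_of_geomForm_eq_zero M hrk]
  -- split `v` into a component in the plane of `α_k, α_l` and one `B`-orthogonal to it, which is
  -- possible because the form is nondegenerate on the plane: `1 - cos² (π / m_kl) ≠ 0`
  refine LinearMap.ext fun v => ?_
  set c := cos (π / M k l)
  have hc : 1 - c ^ 2 ≠ 0 := by
    rw [← sin_sq]
    exact pow_ne_zero 2 (M.sin_pi_div_ne_zero hkl hm)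
  have hkl' : M.geomForm k (single l 1) = -c := by rw [geomForm_single, M.symmetric]
  have hlk' : M.geomForm l (single k 1) = -c := geomForm_single M k l
  set a := (M.geomForm k v + c * M.geomForm l v) / (1 - c ^ 2)
  set b := (M.geomForm l v + c * M.geomForm k v) / (1 - c ^ 2)
  have hrk : M.geomForm k (v - a • single k 1 - b • single l 1) = 0 := by
    simp only [map_sub, map_smul, geomForm_single_self, hkl', smul_eq_mul, a, b]
    field_simp
    ring
  have hrl : M.geomForm l (v - a • single k 1 - b • single l 1) = 0 := by
    simp only [map_sub, map_smul, geomForm_single_self, hlk', smul_eq_mul, a, b]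
    field_simp
    ring
  have hv : v = a • single k 1 + b • single l 1 + (v - a • single k 1 - b • single l 1) := by
    module
  rw [Module.End.one_apply, hv, map_add, map_add, map_smul, map_smul, hk, hl, hperp hrk hrl]

theorem isLiftable_geomRefl : M.IsLiftable M.geomRefl := by
  intro k l
  rcases eq_or_ne k l with rfl | hkl
  · rw [M.diagonal, pow_one, geomRefl_mul_self]
  rcases eq_or_ne (M k l) 0 with hm | hm
  · rw [hm, pow_zero]
  · exact M.geomRefl_mul_geomRefl_pow hkl hm

end CoxeterMatrix

namespace CoxeterSystem

variable {B : Type*} {W : Type*} [Group W] {M : CoxeterMatrix B} (cs : CoxeterSystem M W)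

local prefix:100 "s" => cs.simple
local prefix:100 "π" => cs.wordProd
local prefix:100 "ℓ" => cs.length
local prefix:100 "ris" => cs.rightInvSeq

theorem simple_mul_pow_mul_simple (i j : B) (k : ℕ) :
    s j * (s i * s j) ^ k * s j = ((s i * s j) ^ k)⁻¹ := by
  have h : s j * (s i * s j) * (s j)⁻¹ = (s i * s j)⁻¹ := by
    simp [mul_assoc, cs.inv_simple]
  calc s j * (s i * s j) ^ k * s j = (s j * (s i * s j) * (s j)⁻¹) ^ k := by
        rw [conj_pow, cs.inv_simple]
    _ = ((s i * s j) ^ k)⁻¹ := by rw [h, inv_pow]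

section ReflParity

open scoped Classical

noncomputable def reflParityGen (i : B) : Function.End (W × ZMod 2) :=
  fun p => (s i * p.1 * s i, p.2 + if p.1 = s i then 1 else 0)

theorem reflParityGen_mul_reflParityGen (i j : B) :
    reflParityGen cs i * reflParityGen cs j = fun q : W × ZMod 2 =>
      (s i * s j * q.1 * (s i * s j)⁻¹,
        q.2 + ((if q.1 = s j then 1 else 0) + if q.1 = s j * s i * s j then 1 else 0)) := by
  funext ⟨u, δ⟩
  have hconj : s j * u * s j = s i ↔ u = s j * s i * s j := by
    simpa only [cs.inv_simple] using conj_eq_iff (s j) u (s i)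
  refine Prod.ext ?_ ?_
  · simp only [Function.End.mul_def, Function.comp, reflParityGen, mul_inv_rev, cs.inv_simple]
    group
  · simp only [Function.End.mul_def, Function.comp, reflParityGen, hconj, add_assoc]

theorem isLiftable_reflParityGen : M.IsLiftable (reflParityGen cs) := by
  intro i j
  funext ⟨t, ε⟩
  set p := s i * s j
  have hpm : p ^ M i j = 1 := cs.simple_mul_simple_pow i j
  generalize M i j = m at hpm ⊢
  have hji : s j * s i = p⁻¹ := by simp [p, cs.inv_simple]
  have hcomm (k : ℕ) : s j * p ^ k = (p ^ k)⁻¹ * s j := by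
    rw [← simple_mul_pow_mul_simple cs i j k, cs.simple_mul_simple_cancel_right]
  -- the `k`-th factor flips the parity iff `t` is `p⁻²ᵏ s j` or `p⁻²ᵏ⁻¹ s j`; these reflections
  -- repeat with period `m`, so every flip happens an even number of times
  let g (u : W) : ZMod 2 := (if u = s j then 1 else 0) + if u = s j * s i * s j then 1 else 0
  let f (n : ℕ) : ZMod 2 := if t = (p ^ n)⁻¹ * s j then 1 else 0
  have hsummand (k : ℕ) : g (p ^ k * t * (p ^ k)⁻¹) = f (2 * k) + f (2 * k + 1) := by
    have e1 : (p ^ k)⁻¹ * s j * p ^ k = (p ^ (2 * k))⁻¹ * s j := by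
      rw [mul_assoc, hcomm, two_mul, pow_add, mul_inv_rev, mul_assoc]
    have e2 : (p ^ k)⁻¹ * (s j * s i * s j) * p ^ k = (p ^ (2 * k + 1))⁻¹ * s j := by
      rw [hji, mul_assoc, mul_assoc, hcomm, pow_succ, two_mul, pow_add]
      group
    simp only [g, f, conj_eq_iff, e1, e2]
  have hperiodic (n : ℕ) : f (m + n) = f n := by simp only [f, pow_add, hpm, one_mul]
  change (reflParityGen cs i * reflParityGen cs j)^[m] (t, ε) = (t, ε)
  rw [reflParityGen_mul_reflParityGen]
  refine (iterate_skewProduct (fun u => p * u * p⁻¹) g m t ε).trans ?_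
  simp only [iterate_conj, hpm, one_mul, inv_one, mul_one, hsummand,
    sum_range_pair_eq_zero_of_periodic hperiodic, add_zero]

noncomputable def reflParityRep : W →* Function.End (W × ZMod 2) :=
  cs.lift ⟨reflParityGen cs, isLiftable_reflParityGen cs⟩

theorem reflParityRep_wordProd (ω : List B) (t : W) (ε : ZMod 2) :
    reflParityRep cs (π ω) (t, ε) = (π ω * t * (π ω)⁻¹, ε + (ris ω).count t) := by
  induction ω generalizing t ε with
  | nil => simp [Function.End.one_def]
  | cons i ω ih =>
    have hiff : (π ω)⁻¹ * s i * π ω = t ↔ π ω * t * (π ω)⁻¹ = s i := by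
      rw [conj_eq_iff]; exact eq_comm
    rw [cs.wordProd_cons, map_mul]
    change reflParityRep cs (s i) (reflParityRep cs (π ω) (t, ε)) = _
    rw [ih]
    simp only [reflParityRep, cs.lift_apply_simple, reflParityGen, rightInvSeq, List.count_cons,
      beq_iff_eq, hiff, mul_inv_rev, cs.inv_simple]
    refine Prod.ext (by group) ?_
    split_ifs <;> simp [add_assoc]

/-- The parity of the number of occurrences of `t` in the right inversion sequence of a word for
`w` (`inversionParity_wordProd`); it does not depend on the word because it is read off from a
representation of `W`. -/
noncomputable def inversionParity (w t : W) : ZMod 2 := (reflParityRep cs w (t, 0)).2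

theorem inversionParity_wordProd (ω : List B) (t : W) :
    inversionParity cs (π ω) t = (ris ω).count t := by
  simp [inversionParity, reflParityRep_wordProd]

theorem reflParityRep_apply (w t : W) (ε : ZMod 2) :
    reflParityRep cs w (t, ε) = (w * t * w⁻¹, ε + inversionParity cs w t) := by
  obtain ⟨ω, rfl⟩ := cs.wordProd_surjective w
  rw [reflParityRep_wordProd, inversionParity_wordProd]

theorem inversionParity_mul (u v t : W) :
    inversionParity cs (u * v) t = inversionParity cs v t + inversionParity cs u (v * t * v⁻¹) := by
  show (reflParityRep cs (u * v) (t, 0)).2 = _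
  rw [map_mul]
  change (reflParityRep cs u (reflParityRep cs v (t, 0))).2 = _
  rw [reflParityRep_apply cs v, reflParityRep_apply cs u, zero_add]

theorem inversionParity_one (t : W) : inversionParity cs 1 t = 0 := by
  simpa using inversionParity_wordProd cs [] t

theorem inversionParity_simple_self (i : B) : inversionParity cs (s i) (s i) = 1 := by
  simpa using inversionParity_wordProd cs [i] (s i)

variable {cs} in
theorem IsReflection.inversionParity_self {t : W} (ht : cs.IsReflection t) :
    inversionParity cs t t = 1 := by
  obtain ⟨v, i, rfl⟩ := ht
  have e1 : v⁻¹ * (v * s i * v⁻¹) * v⁻¹⁻¹ = s i := by group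
  have e2 : s i * s i * (s i)⁻¹ = s i := by simp [cs.inv_simple]
  have hcancel := inversionParity_mul cs v v⁻¹ (v * s i * v⁻¹)
  rw [mul_inv_cancel, inversionParity_one, e1] at hcancel
  rw [inversionParity_mul, e1, inversionParity_mul, inversionParity_simple_self, e2]
  linear_combination -hcancel

variable {cs} in
theorem IsRightInversion.inversionParity_eq_one {w t : W} (ht : cs.IsRightInversion w t) :
    inversionParity cs w t = 1 := by
  obtain ⟨τ, hτ, hτw⟩ := cs.exists_isReduced (w * t)
  have hnot : t ∉ ris τ := fun hmem => by
    have := (cs.isRightInversion_of_mem_rightInvSeq hτ hmem).2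
    rw [← hτw, mul_assoc, ht.1.mul_self, mul_one] at this
    exact lt_asymm this ht.2
  have hsplit : w = w * t * t := by rw [mul_assoc, ht.1.mul_self, mul_one]
  rw [hsplit, inversionParity_mul, ht.1.inversionParity_self, ht.1.inv, ht.1.mul_self, one_mul,
    hτw, inversionParity_wordProd, List.count_eq_zero.2 hnot, Nat.cast_zero, add_zero]

variable {cs} in
theorem IsRightInversion.mem_rightInvSeq {w t : W} (ht : cs.IsRightInversion w t) {ω : List B}
    (hπ : π ω = w) : t ∈ ris ω := by
  have h := ht.inversionParity_eq_one
  rw [← hπ, inversionParity_wordProd] at h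
  exact List.count_pos_iff.1 (Nat.pos_of_ne_zero fun h0 => by simp [h0] at h)

end ReflParity

variable {cs} in
theorem IsRightInversion.exists_eraseIdx {w t : W} (ht : cs.IsRightInversion w t) {ω : List B}
    (hπ : π ω = w) : ∃ k < ω.length, w * t = π (ω.eraseIdx k) := by
  obtain ⟨k, hk, hkt⟩ := List.getElem_of_mem (ht.mem_rightInvSeq hπ)
  refine ⟨k, by simpa using hk, ?_⟩
  rw [← cs.wordProd_mul_getD_rightInvSeq, List.getD_eq_getElem _ _ hk, hkt, hπ]

theorem exists_sublist_isReduced (ω : List B) :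
    ∃ ω' : List B, ω'.Sublist ω ∧ cs.IsReduced ω' ∧ π ω' = π ω := by
  induction ω using List.reverseRecOn with
  | nil => exact ⟨[], List.Sublist.slnil, by simp [IsReduced], rfl⟩
  | append_singleton κ i ih =>
    obtain ⟨κ', hsub, hred, hπ⟩ := ih
    have hπi : π (κ ++ [i]) = π κ' * s i := by rw [wordProd_append, wordProd_singleton, hπ]
    rcases cs.length_mul_simple (π κ') i with hup | hdown
    · refine ⟨κ' ++ [i], hsub.append (List.Sublist.refl _), ?_, by rw [hπi, wordProd_append,
        wordProd_singleton]⟩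
      simp only [IsReduced, wordProd_append, wordProd_singleton, hup, hred.eq, List.length_append,
        List.length_singleton]
    · have hinv : cs.IsRightInversion (π κ') (s i) := ⟨cs.isReflection_simple i, by omega⟩
      obtain ⟨k, hk, heq⟩ := hinv.exists_eraseIdx rfl
      refine ⟨κ'.eraseIdx k, ((κ'.eraseIdx_sublist k).trans hsub).trans
        (List.sublist_append_left _ _), ?_, by rw [← heq, hπi]⟩
      rw [IsReduced, ← heq, List.length_eraseIdx_of_lt hk, ← hred.eq]
      omega

variable {cs} in
theorem IsReduced.length_lt_length_simple_mul {ω : List B} {i : B} (h : cs.IsReduced (i :: ω)) :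
    ℓ (π ω) < ℓ (s i * π ω) := by
  have h' : cs.IsReduced ω := by simpa using h.drop 1
  rw [← wordProd_cons, h.eq, h'.eq, List.length_cons]
  omega

theorem simple_mul_mul_simple_eq {w : W} {i j : B} (hi : ℓ w < ℓ (s i * w))
    (hj : ℓ w < ℓ (w * s j)) (hij : ℓ (s i * w * s j) < ℓ (s i * w)) : s i * w * s j = w := by
  obtain ⟨μ, hμ, rfl⟩ := cs.exists_isReduced w
  have hinv : cs.IsRightInversion (π (i :: μ)) (s j) :=
    ⟨cs.isReflection_simple j, by rwa [wordProd_cons]⟩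
  obtain ⟨k, hk, hexch⟩ := hinv.exists_eraseIdx rfl
  rw [wordProd_cons] at hexch
  cases k with
  | zero => simpa using hexch
  | succ k =>
    rw [List.eraseIdx_cons_succ, wordProd_cons, mul_assoc] at hexch
    have hlen := cs.length_wordProd_le (μ.eraseIdx k)
    rw [List.length_eraseIdx_of_lt (by simpa using hk), ← mul_left_cancel hexch, ← hμ.eq] at hlen
    omega

theorem simple_injective : Function.Injective cs.simple := by
  intro i j hij
  by_contra hne
  have h := congrArg
    (fun w => cs.lift ⟨M.geomRefl, M.isLiftable_geomRefl⟩ w (Finsupp.single i 1) i) hij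
  norm_num [lift_apply_simple, CoxeterMatrix.geomRefl_apply,
    CoxeterMatrix.geomForm_single_self, Finsupp.single_eq_of_ne hne] at h

end CoxeterSystem

namespace Paper

open CoxeterSystem

variable {B : Type*} {W : Type*} [Group W] {M : CoxeterMatrix B} (cs : CoxeterSystem M W)

local prefix:100 "s" => cs.simple
local prefix:100 "π" => cs.wordProd
local prefix:100 "ℓ" => cs.length

theorem BruhatLE.refl (u : W) : BruhatLE cs u u := Relation.ReflTransGen.refl

variable {cs} in
theorem BruhatLE.trans {u v w : W} (h₁ : BruhatLE cs u v) (h₂ : BruhatLE cs v w) :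
    BruhatLE cs u w :=
  Relation.ReflTransGen.trans h₁ h₂

theorem bruhatLE_mul {u t : W} (ht : cs.IsReflection t) (h : ℓ u < ℓ (u * t)) :
    BruhatLE cs u (u * t) :=
  Relation.ReflTransGen.single ⟨t, ht, rfl, h⟩

variable {cs} in
theorem BruhatLE.length_le {u v : W} (h : BruhatLE cs u v) : ℓ u ≤ ℓ v := by
  induction h with
  | refl => exact le_rfl
  | tail _ hstep ih =>
    obtain ⟨t, -, rfl, hlen⟩ := hstep
    omega

variable {cs} in
theorem BruhatLE.eq_one {u : W} (h : BruhatLE cs u 1) : u = 1 := by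
  simpa using h.length_le

theorem bruhatLE_simple_mul {u : W} {i : B} (h : ℓ u < ℓ (s i * u)) :
    BruhatLE cs u (s i * u) := by
  have ht : cs.IsReflection (u⁻¹ * s i * u) := by
    simpa using (cs.isReflection_simple i).conj u⁻¹
  have hconj : u * (u⁻¹ * s i * u) = s i * u := by group
  rw [← hconj]
  exact bruhatLE_mul cs ht (by rwa [hconj])

theorem simple_mul_bruhatLE {u : W} {i : B} (h : ℓ (s i * u) < ℓ u) :
    BruhatLE cs (s i * u) u := by
  simpa using bruhatLE_simple_mul cs (u := s i * u) (i := i) (by simpa using h)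

theorem exists_reduced_sublist_of_bruhatLE {u w : W} (h : BruhatLE cs u w) {ω : List B}
    (hω : cs.IsReduced ω) (hπ : π ω = w) :
    ∃ δ : List B, δ.Sublist ω ∧ cs.IsReduced δ ∧ π δ = u := by
  induction h using Relation.ReflTransGen.head_induction_on with
  | refl => exact ⟨ω, List.Sublist.refl ω, hω, hπ⟩
  | @head u v hstep _ ih =>
    obtain ⟨t, ht, rfl, hlen⟩ := hstep
    obtain ⟨δ, hδ, hδred, hδπ⟩ := ih
    have hinv : cs.IsRightInversion (π δ) t := ⟨ht, by rwa [hδπ, mul_assoc, ht.mul_self, mul_one]⟩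
    obtain ⟨k, -, hk⟩ := hinv.exists_eraseIdx rfl
    obtain ⟨δ', hδ', hδ'red, hδ'π⟩ := cs.exists_sublist_isReduced (δ.eraseIdx k)
    refine ⟨δ', hδ'.trans ((δ.eraseIdx_sublist k).trans hδ), hδ'red, ?_⟩
    rw [hδ'π, ← hk, hδπ, mul_assoc, ht.mul_self, mul_one]

theorem bruhatLE_wordProd_of_sublist_of_lift {ω ω' : List B} (hω : cs.IsReduced ω)
    (h : ω'.Sublist ω)
    (hlift : ∀ ⦃u w : W⦄ ⦃i : B⦄, ℓ w < ω.length → BruhatLE cs u w → ℓ w < ℓ (s i * w) →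
      BruhatLE cs (s i * u) (s i * w)) :
    BruhatLE cs (π ω') (π ω) := by
  induction ω generalizing ω' with
  | nil => rw [List.sublist_nil.1 h]; exact .refl cs _
  | cons i κ ih =>
    have hκ : cs.IsReduced κ := by simpa using hω.drop 1
    have hup := hω.length_lt_length_simple_mul
    have hlift' : ∀ ⦃u w : W⦄ ⦃j : B⦄, ℓ w < κ.length → BruhatLE cs u w →
        ℓ w < ℓ (s j * w) → BruhatLE cs (s j * u) (s j * w) :=
      fun u w j hl => hlift (by simp only [List.length_cons]; omega)
    rw [wordProd_cons]
    rcases List.sublist_cons_iff.1 h with h' | ⟨κ', rfl, h'⟩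
    · exact (ih hκ h' hlift').trans (bruhatLE_simple_mul cs hup)
    · rw [wordProd_cons]
      exact hlift (by rw [hκ.eq, List.length_cons]; omega) (ih hκ h' hlift') hup

theorem le_or_simple_mul_le_of_subword {u w : W} {i : B}
    (hsub : ∀ ⦃ω ω' : List B⦄, cs.IsReduced ω → ω.length < ℓ w → ω'.Sublist ω →
      BruhatLE cs (π ω') (π ω))
    (h : BruhatLE cs u w) (hw : ℓ (s i * w) < ℓ w) :
    BruhatLE cs u (s i * w) ∨ ℓ (s i * u) < ℓ u ∧ BruhatLE cs (s i * u) (s i * w) := by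
  obtain ⟨ρ, hρ, hρw⟩ := cs.exists_isReduced (s i * w)
  have hρlen : ρ.length < ℓ w := by rw [← hρ.eq, ← hρw]; exact hw
  have hw' : π (i :: ρ) = w := by rw [wordProd_cons, ← hρw, simple_mul_simple_cancel_left]
  have hred : cs.IsReduced (i :: ρ) := by
    show ℓ (π (i :: ρ)) = _
    rw [hw', List.length_cons, ← hρ.eq, ← hρw]
    rcases cs.length_simple_mul w i with h' | h' <;> omega
  obtain ⟨δ, hδ, hδred, rfl⟩ := exists_reduced_sublist_of_bruhatLE cs h hred hw'
  rcases List.sublist_cons_iff.1 hδ with hδ' | ⟨δ', rfl, hδ'⟩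
  · exact .inl (hρw ▸ hsub hρ hρlen hδ')
  · right
    rw [wordProd_cons, simple_mul_simple_cancel_left, hρw]
    exact ⟨hδred.length_lt_length_simple_mul, hsub hρ hρlen hδ'⟩

/-- The lifting property (Deodhar's property Z), proved together with the subword property
`bruhatLE_wordProd_of_sublist` by induction on `ℓ w`. -/
theorem simple_mul_le_simple_mul {u w : W} {i : B} (h : BruhatLE cs u w)
    (hw : ℓ w < ℓ (s i * w)) : BruhatLE cs (s i * u) (s i * w) := by
  induction hn : ℓ w using Nat.strong_induction_on generalizing u w i with
  | _ n IH =>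
  have IH' : ∀ ⦃u' w' : W⦄ ⦃j : B⦄, ℓ w' < n → BruhatLE cs u' w' → ℓ w' < ℓ (s j * w') →
      BruhatLE cs (s j * u') (s j * w') := fun u' w' j hl h' hw' => IH _ hl h' hw' rfl
  rcases Relation.ReflTransGen.cases_tail h with rfl | ⟨v, huv, t, ht, rfl, hvt⟩
  · exact .refl cs _
  have hvw : BruhatLE cs v (v * t) := bruhatLE_mul cs ht hvt
  have hwsw : BruhatLE cs (v * t) (s i * (v * t)) := bruhatLE_simple_mul cs hw
  rcases cs.length_simple_mul v i with hv | hv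
  · rw [← mul_assoc]
    exact (IH' (j := i) (by omega) huv (by omega)).trans
      (bruhatLE_mul cs ht (by rw [mul_assoc]; omega))
  have hsub : ∀ ⦃ω ω' : List B⦄, cs.IsReduced ω → ω.length < ℓ v → ω'.Sublist ω →
      BruhatLE cs (π ω') (π ω) := fun ω ω' hω hlen h' =>
    bruhatLE_wordProd_of_sublist_of_lift cs hω h' fun u' w' j hl => IH' (by omega)
  rcases le_or_simple_mul_le_of_subword cs (i := i) hsub huv (by omega) with hu | ⟨-, hsu⟩
  · rcases cs.length_simple_mul u i with hu' | hu'
    · have h' := IH' (j := i) (by omega) hu (by rw [simple_mul_simple_cancel_left]; omega)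
      rw [simple_mul_simple_cancel_left] at h'
      exact (h'.trans hvw).trans hwsw
    · exact ((((simple_mul_bruhatLE cs (by omega)).trans hu).trans
        (simple_mul_bruhatLE cs (by omega))).trans hvw).trans hwsw
  · exact ((hsu.trans (simple_mul_bruhatLE cs (by omega))).trans hvw).trans hwsw

theorem bruhatLE_wordProd_of_sublist {ω ω' : List B} (hω : cs.IsReduced ω) (h : ω'.Sublist ω) :
    BruhatLE cs (π ω') (π ω) :=
  bruhatLE_wordProd_of_sublist_of_lift cs hω h fun _ _ _ _ => simple_mul_le_simple_mul cs

theorem le_or_simple_mul_le {u w : W} {i : B} (h : BruhatLE cs u w) (hw : ℓ (s i * w) < ℓ w) :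
    BruhatLE cs u (s i * w) ∨ ℓ (s i * u) < ℓ u ∧ BruhatLE cs (s i * u) (s i * w) :=
  le_or_simple_mul_le_of_subword cs (fun _ _ hω _ => bruhatLE_wordProd_of_sublist cs hω) h hw

theorem simple_mul_le_simple_mul_of_length_lt {u w : W} {i : B} (h : BruhatLE cs u w)
    (hw : ℓ (s i * w) < ℓ w) (hu : ℓ (s i * u) < ℓ u) : BruhatLE cs (s i * u) (s i * w) :=
  (le_or_simple_mul_le cs h hw).elim (fun h' => (simple_mul_bruhatLE cs hu).trans h') And.right

theorem le_simple_mul_of_length_lt {u w : W} {i : B} (h : BruhatLE cs u w)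
    (hw : ℓ (s i * w) < ℓ w) (hu : ℓ u < ℓ (s i * u)) : BruhatLE cs u (s i * w) :=
  (le_or_simple_mul_le cs h hw).resolve_right fun h' => lt_asymm hu h'.1

theorem le_of_simple_mul_le_simple_mul {u w : W} {i : B} (h : BruhatLE cs (s i * u) (s i * w))
    (hw : ℓ (s i * w) < ℓ w) : BruhatLE cs u w := by
  have h' := simple_mul_le_simple_mul cs h (by rwa [simple_mul_simple_cancel_left])
  rwa [simple_mul_simple_cancel_left, simple_mul_simple_cancel_left] at h'

theorem mem_parabolic_iff {J : Set B} {w : W} :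
    w ∈ parabolic cs J ↔ ∃ ω : List B, (∀ b ∈ ω, b ∈ J) ∧ π ω = w := by
  constructor
  · intro h
    induction h using Subgroup.closure_induction with
    | mem x hx =>
      obtain ⟨j, hj, rfl⟩ := hx
      exact ⟨[j], by simpa using hj, cs.wordProd_singleton j⟩
    | one => exact ⟨[], by simp, cs.wordProd_nil⟩
    | mul x y _ _ hx hy =>
      obtain ⟨ω₁, h₁, rfl⟩ := hx
      obtain ⟨ω₂, h₂, rfl⟩ := hy
      exact ⟨ω₁ ++ ω₂, by simpa using fun b hb => hb.elim (h₁ b) (h₂ b),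
        cs.wordProd_append ω₁ ω₂⟩
    | inv x _ hx =>
      obtain ⟨ω, hω, rfl⟩ := hx
      exact ⟨ω.reverse, by simpa using hω, cs.wordProd_reverse ω⟩
  · rintro ⟨ω, hω, rfl⟩
    induction ω with
    | nil => exact (parabolic cs J).one_mem
    | cons i ω ih =>
      rw [wordProd_cons]
      exact (parabolic cs J).mul_mem (Subgroup.subset_closure ⟨i, hω i (by simp), rfl⟩)
        (ih fun b hb => hω b (by simp [hb]))

theorem parabolic_mono {J J' : Set B} (h : J ⊆ J') : parabolic cs J ≤ parabolic cs J' :=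
  Subgroup.closure_mono (Set.image_mono h)

theorem simple_mem_parabolic_iff {J : Set B} {i : B} : s i ∈ parabolic cs J ↔ i ∈ J := by
  refine ⟨fun h => ?_, fun h => Subgroup.subset_closure ⟨i, h, rfl⟩⟩
  obtain ⟨ω, hω, hπ⟩ := (mem_parabolic_iff cs).1 h
  obtain ⟨δ, hδ, hδred, hδπ⟩ := cs.exists_sublist_isReduced ω
  obtain ⟨j, rfl⟩ : ∃ j, δ = [j] := by
    rw [← List.length_eq_one_iff, ← hδred.eq, hδπ, hπ, length_simple]
  rw [wordProd_singleton, hπ] at hδπ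
  exact cs.simple_injective hδπ ▸ hω j (hδ.subset (by simp))

variable {cs} in
theorem _root_.CoxeterSystem.IsRightInversion.mem_parabolic {J : Set B} {w t : W}
    (ht : cs.IsRightInversion w t) (hw : w ∈ parabolic cs J) : t ∈ parabolic cs J := by
  obtain ⟨ω, hω, rfl⟩ := (mem_parabolic_iff cs).1 hw
  obtain ⟨k, -, hk⟩ := ht.exists_eraseIdx rfl
  have hmem : π (ω.eraseIdx k) ∈ parabolic cs J :=
    (mem_parabolic_iff cs).2 ⟨_, fun b hb => hω b ((ω.eraseIdx_sublist k).subset hb), rfl⟩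
  rw [← hk] at hmem
  simpa using (parabolic cs J).mul_mem ((parabolic cs J).inv_mem hw) hmem

theorem IsReduced.mem_of_wordProd_mem_parabolic {J : Set B} {ω : List B} (hω : cs.IsReduced ω)
    (h : π ω ∈ parabolic cs J) : ∀ b ∈ ω, b ∈ J := by
  induction ω with
  | nil => simp
  | cons i ω ih =>
    have hω' : cs.IsReduced ω := by simpa using hω.drop 1
    have hdesc : cs.IsRightInversion (π (i :: ω))⁻¹ (s i) := by
      refine ⟨cs.isReflection_simple i, ?_⟩
      rw [← cs.inv_simple i, ← mul_inv_rev, length_inv, length_inv, wordProd_cons,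
        simple_mul_simple_cancel_left]
      exact hω.length_lt_length_simple_mul
    have hi : s i ∈ parabolic cs J := hdesc.mem_parabolic ((parabolic cs J).inv_mem h)
    have h' : π ω ∈ parabolic cs J := by
      simpa [wordProd_cons] using (parabolic cs J).mul_mem hi h
    simpa [(simple_mem_parabolic_iff cs).1 hi] using ih hω' h'

theorem mem_parabolic_iInter {ι : Type*} {Js : ι → Set B} {w : W}
    (h : ∀ i, w ∈ parabolic cs (Js i)) : w ∈ parabolic cs (⋂ i, Js i) := by
  obtain ⟨ω, hω, rfl⟩ := cs.exists_isReduced w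
  exact (mem_parabolic_iff cs).2 ⟨ω, fun b hb => Set.mem_iInter.2 fun i =>
    IsReduced.mem_of_wordProd_mem_parabolic cs hω (h i) b hb, rfl⟩

section MinRep

variable {J : Set B}

variable {cs} in
theorem IsMinRep.congr {x x' m : W} (h : IsMinRep cs J x m) (hx : x⁻¹ * x' ∈ parabolic cs J) :
    IsMinRep cs J x' m := by
  refine ⟨?_, fun y hy => h.2 y ?_⟩
  · simpa [mul_assoc] using (parabolic cs J).mul_mem ((parabolic cs J).inv_mem hx) h.1
  · simpa [mul_assoc] using (parabolic cs J).mul_mem hx hy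

variable {cs} in
theorem IsMinRep.self {x m : W} (h : IsMinRep cs J x m) : IsMinRep cs J m m :=
  h.congr h.1

theorem exists_isMinRep (J : Set B) (x : W) : ∃ m, IsMinRep cs J x m := by
  classical
  have hex : ∃ n, ∃ y, x⁻¹ * y ∈ parabolic cs J ∧ ℓ y = n :=
    ⟨ℓ x, x, by simp [(parabolic cs J).one_mem], rfl⟩
  obtain ⟨y, hy, hlen⟩ := Nat.find_spec hex
  exact ⟨y, hy, fun y' hy' => hlen ▸ Nat.find_le ⟨y', hy', rfl⟩⟩

noncomputable def minRep (J : Set B) (x : W) : W := (exists_isMinRep cs J x).choose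

theorem isMinRep_minRep (J : Set B) (x : W) : IsMinRep cs J x (minRep cs J x) :=
  (exists_isMinRep cs J x).choose_spec

theorem inv_mul_minRep_mem (J : Set B) (x : W) : (minRep cs J x)⁻¹ * x ∈ parabolic cs J := by
  simpa using (parabolic cs J).inv_mem (isMinRep_minRep cs J x).1

/-- A reduced word for `m` followed by a `J`-word for `u` cannot be shortened by deleting letters
of the first part, so by the deletion property it is reduced. -/
theorem length_mul_of_isMinRep {m u : W} (hm : IsMinRep cs J m m) (hu : u ∈ parabolic cs J) :
    ℓ (m * u) = ℓ m + ℓ u := by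
  obtain ⟨μ, hμ, rfl⟩ := cs.exists_isReduced m
  obtain ⟨ν, hνJ, rfl⟩ := (mem_parabolic_iff cs).1 hu
  obtain ⟨δ, hδ, hδred, hδπ⟩ := cs.exists_sublist_isReduced (μ ++ ν)
  obtain ⟨δ₁, δ₂, rfl, h₁, h₂⟩ := List.sublist_append_iff.1 hδ
  have hδ₂J : π δ₂ ∈ parabolic cs J :=
    (mem_parabolic_iff cs).2 ⟨δ₂, fun b hb => hνJ b (h₂.subset hb), rfl⟩
  rw [wordProd_append, wordProd_append] at hδπ
  have hcoset : (π μ)⁻¹ * π δ₁ ∈ parabolic cs J := by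
    rw [eq_mul_inv_of_mul_eq hδπ]
    simpa [mul_assoc] using (parabolic cs J).mul_mem hu ((parabolic cs J).inv_mem hδ₂J)
  have hlen₁ : μ.length ≤ δ₁.length :=
    hμ.eq ▸ (hm.2 _ hcoset).trans (cs.length_wordProd_le δ₁)
  have hδ₁ : δ₁ = μ := h₁.eq_of_length (le_antisymm h₁.length_le hlen₁)
  rw [hδ₁] at hδπ hδred
  have hδ₂ : π δ₂ = π ν := mul_left_cancel hδπ
  rw [← hδπ, ← wordProd_append, hδred.eq, List.length_append, hμ.eq, ← hδ₂,
    (show cs.IsReduced δ₂ by simpa using hδred.drop μ.length).eq]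

variable {cs} in
theorem IsMinRep.eq_minRep {x m : W} (h : IsMinRep cs J x m) : m = minRep cs J x := by
  set m' := minRep cs J x
  have h' := isMinRep_minRep cs J x
  have hu : m⁻¹ * m' ∈ parabolic cs J := by
    simpa [mul_assoc] using (parabolic cs J).mul_mem ((parabolic cs J).inv_mem h.1) h'.1
  have hadd := length_mul_of_isMinRep cs h.self hu
  have hle : ℓ m' ≤ ℓ m := h'.2 m h.1
  rw [mul_inv_cancel_left] at hadd
  have : m⁻¹ * m' = 1 := (cs.length_eq_zero_iff).1 (by omega)
  rw [← mul_inv_cancel_left m m', this, mul_one]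

theorem minRep_eq_minRep {x y : W} (h : x⁻¹ * y ∈ parabolic cs J) :
    minRep cs J x = minRep cs J y :=
  ((isMinRep_minRep cs J x).congr h).eq_minRep

theorem isMinRep_iff {x m : W} :
    IsMinRep cs J x m ↔ x⁻¹ * m ∈ parabolic cs J ∧ ∀ j ∈ J, ℓ m < ℓ (m * s j) := by
  refine ⟨fun h => ⟨h.1, fun j hj => ?_⟩, fun ⟨hxm, hdesc⟩ => ?_⟩
  · rw [length_mul_of_isMinRep cs h.self ((simple_mem_parabolic_iff cs).2 hj), length_simple]
    omega
  set m₀ := minRep cs J x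
  have hm₀ := isMinRep_minRep cs J x
  have hu : m₀⁻¹ * m ∈ parabolic cs J := by
    simpa [mul_assoc] using (parabolic cs J).mul_mem ((parabolic cs J).inv_mem hm₀.1) hxm
  suffices m₀⁻¹ * m = 1 by rwa [← inv_mul_eq_one.1 this]
  by_contra hne
  obtain ⟨j, hj⟩ := cs.exists_rightDescent_of_ne_one hne
  have hjs : cs.IsRightInversion (m₀⁻¹ * m) (s j) := ⟨cs.isReflection_simple j, hj⟩
  have hjJ : j ∈ J := (simple_mem_parabolic_iff cs).1 (hjs.mem_parabolic hu)
  have h₁ := length_mul_of_isMinRep cs hm₀.self hu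
  have h₂ := length_mul_of_isMinRep cs hm₀.self ((parabolic cs J).mul_mem hu
    ((simple_mem_parabolic_iff cs).2 hjJ))
  rw [mul_inv_cancel_left] at h₁
  rw [← mul_assoc, mul_inv_cancel_left] at h₂
  have := hdesc j hjJ
  exact absurd hj (by unfold IsRightDescent; omega)

theorem minRep_eq_one_iff {x : W} : minRep cs J x = 1 ↔ x ∈ parabolic cs J := by
  constructor
  · intro h
    simpa [h] using inv_mul_minRep_mem cs J x
  · intro h
    refine ((isMinRep_iff cs).2 ⟨by simpa using h, fun j _ => ?_⟩).eq_minRep.symm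
    simp

variable {cs} in
theorem IsMinRep.simple_mul {x m : W} {b : B} (h : IsMinRep cs J x m)
    (hb : ℓ (s b * m) < ℓ m) : IsMinRep cs J (s b * x) (s b * m) := by
  rw [isMinRep_iff] at h ⊢
  refine ⟨by simpa [mul_assoc] using h.1, fun j hj => ?_⟩
  have := h.2 j hj
  rw [mul_assoc]
  rcases cs.length_simple_mul m b with h₁ | h₁ <;>
    rcases cs.length_simple_mul (m * s j) b with h₂ | h₂ <;> omega

variable {cs} in
/-- Deodhar's lemma: if `s b m` is not minimal in its coset, then `s b m = m s j` with `j ∈ J`. -/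
theorem IsMinRep.simple_mul_or {x m : W} {b : B} (h : IsMinRep cs J x m)
    (hb : ℓ m < ℓ (s b * m)) : IsMinRep cs J (s b * x) (s b * m) ∨ IsMinRep cs J (s b * x) m := by
  have hm := (isMinRep_iff cs).1 h
  by_cases hdesc : ∀ j ∈ J, ℓ (s b * m) < ℓ (s b * m * s j)
  · exact .inl ((isMinRep_iff cs).2 ⟨by simpa [mul_assoc] using hm.1, hdesc⟩)
  push Not at hdesc
  obtain ⟨j, hj, hle⟩ := hdesc
  have hexch := cs.simple_mul_mul_simple_eq hb (hm.2 j hj)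
    (lt_of_le_of_ne hle (cs.length_mul_simple_ne _ j))
  refine .inr (h.self.congr ?_)
  have hsb : s b = m * s j * m⁻¹ := eq_mul_inv_of_mul_eq <| calc
    s b * m = s b * m * s j * s j := (cs.simple_mul_simple_cancel_right j).symm
    _ = m * s j := by rw [hexch]
  rw [show m⁻¹ * (s b * x) = s j * (x⁻¹ * m)⁻¹ by rw [hsb]; group]
  exact (parabolic cs J).mul_mem ((simple_mem_parabolic_iff cs).2 hj)
    ((parabolic cs J).inv_mem hm.1)

theorem length_minRep_lt_of_length_lt {x : W} {b : B} (hx : ℓ x < ℓ (s b * x)) :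
    ℓ (minRep cs J x) < ℓ (s b * minRep cs J x) := by
  have hadd := length_mul_of_isMinRep cs (isMinRep_minRep cs J x).self (inv_mul_minRep_mem cs J x)
  have hle := cs.length_mul_le (s b * minRep cs J x) ((minRep cs J x)⁻¹ * x)
  simp only [mul_inv_cancel_left, mul_assoc] at hadd hle
  rcases cs.length_simple_mul (minRep cs J x) b with h | h <;> omega

theorem minRep_simple_mul_of_length_lt {x : W} {b : B} (hx : ℓ (s b * x) < ℓ x) :
    ℓ (s b * minRep cs J x) < ℓ (minRep cs J x) ∧ minRep cs J (s b * x) = s b * minRep cs J x ∨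
      ℓ (minRep cs J x) < ℓ (s b * minRep cs J x) ∧ minRep cs J (s b * x) = minRep cs J x := by
  have hm := isMinRep_minRep cs J x
  rcases lt_or_gt_of_ne (cs.length_simple_mul_ne (minRep cs J x) b) with hlt | hgt
  · exact .inl ⟨hlt, (hm.simple_mul hlt).eq_minRep.symm⟩
  refine .inr ⟨hgt, ?_⟩
  refine (hm.simple_mul_or hgt).elim (fun h' => ?_) fun h' => h'.eq_minRep.symm
  have hadd := length_mul_of_isMinRep cs h'.self (inv_mul_minRep_mem cs J x)
  have hadd' := length_mul_of_isMinRep cs hm.self (inv_mul_minRep_mem cs J x)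
  simp only [mul_inv_cancel_left, mul_assoc] at hadd hadd'
  omega

theorem minRep_simple_mul_cases (y : W) (b : B) :
    ℓ (s b * minRep cs J y) < ℓ (minRep cs J y) ∧
        minRep cs J (s b * y) = s b * minRep cs J y ∨
      BruhatLE cs (minRep cs J y) (minRep cs J (s b * y)) := by
  have hm := isMinRep_minRep cs J y
  rcases lt_or_gt_of_ne (cs.length_simple_mul_ne (minRep cs J y) b) with hlt | hgt
  · exact .inl ⟨hlt, (hm.simple_mul hlt).eq_minRep.symm⟩
  rcases hm.simple_mul_or hgt with h' | h'
  · rw [← h'.eq_minRep]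
    exact .inr (bruhatLE_simple_mul cs hgt)
  · rw [← h'.eq_minRep]
    exact .inr (.refl cs _)

theorem minRep_simple_mul_le_minRep_simple_mul {x y : W} {b : B}
    (h : BruhatLE cs (minRep cs J x) (minRep cs J y)) (hx : ℓ (s b * x) < ℓ x) :
    BruhatLE cs (minRep cs J (s b * x)) (minRep cs J (s b * y)) := by
  rcases minRep_simple_mul_of_length_lt cs hx with ⟨hxb, hx'⟩ | ⟨hxb, hx'⟩ <;>
    rcases minRep_simple_mul_cases cs y b with ⟨hyb, hy'⟩ | hy' <;> rw [hx']
  · rw [hy']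
    exact simple_mul_le_simple_mul_of_length_lt cs h hyb hxb
  · exact ((simple_mul_bruhatLE cs hxb).trans h).trans hy'
  · rw [hy']
    exact le_simple_mul_of_length_lt cs h hyb hxb
  · exact h.trans hy'

theorem minRep_le_minRep_simple_mul {x y : W} {b : B}
    (h : BruhatLE cs (minRep cs J x) (minRep cs J y)) (hx : ℓ x < ℓ (s b * x)) :
    BruhatLE cs (minRep cs J x) (minRep cs J (s b * y)) := by
  rcases minRep_simple_mul_cases cs y b with ⟨hyb, hy'⟩ | hy'
  · rw [hy']
    exact le_simple_mul_of_length_lt cs h hyb (length_minRep_lt_of_length_lt cs hx)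
  · exact h.trans hy'

theorem minRep_minRep (x : W) : minRep cs J (minRep cs J x) = minRep cs J x :=
  minRep_eq_minRep cs (inv_mul_minRep_mem cs J x)

theorem minRep_simple_mul_of_minRep_eq {x : W} {b : B} (hx : minRep cs J x = x)
    (hb : ℓ (s b * x) < ℓ x) : minRep cs J (s b * x) = s b * x := by
  have h := isMinRep_minRep cs J x
  rw [hx] at h
  exact (h.simple_mul hb).eq_minRep.symm

theorem exists_isReduced_append_minRep (J : Set B) (x : W) :
    ∃ μ ν : List B, cs.IsReduced (μ ++ ν) ∧ π μ = minRep cs J x ∧ π (μ ++ ν) = x ∧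
      ∀ b ∈ ν, b ∈ J := by
  obtain ⟨μ, hμ, hμπ⟩ := cs.exists_isReduced (minRep cs J x)
  obtain ⟨ν, hν, hνπ⟩ := cs.exists_isReduced ((minRep cs J x)⁻¹ * x)
  have hx : π (μ ++ ν) = x := by rw [wordProd_append, ← hμπ, ← hνπ, mul_inv_cancel_left]
  refine ⟨μ, ν, ?_, hμπ.symm, hx,
    IsReduced.mem_of_wordProd_mem_parabolic cs hν (hνπ ▸ inv_mul_minRep_mem cs J x)⟩
  have hadd := length_mul_of_isMinRep cs (isMinRep_minRep cs J x).self
    (inv_mul_minRep_mem cs J x)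
  rw [mul_inv_cancel_left, hνπ, hμπ, hμ.eq, hν.eq] at hadd
  rw [CoxeterSystem.IsReduced, hx, hadd, List.length_append]

theorem minRep_bruhatLE (J : Set B) (x : W) : BruhatLE cs (minRep cs J x) x := by
  obtain ⟨μ, ν, hred, hμ, hx, -⟩ := exists_isReduced_append_minRep cs J x
  rw [← hμ, ← hx]
  exact bruhatLE_wordProd_of_sublist cs hred (List.sublist_append_left μ ν)

/-- A reduced subword for `x` of a reduced word of `y^J u` (`u ∈ W_J`) is a subword of `y^J`
followed by a `J`-word, so `x^J` lies below that subword of `y^J`. -/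
theorem minRep_mono {x y : W} (h : BruhatLE cs x y) :
    BruhatLE cs (minRep cs J x) (minRep cs J y) := by
  obtain ⟨μ, ν, hred, hμ, hy, hνJ⟩ := exists_isReduced_append_minRep cs J y
  obtain ⟨δ, hδ, -, rfl⟩ := exists_reduced_sublist_of_bruhatLE cs h hred hy
  obtain ⟨δ₁, δ₂, rfl, h₁, h₂⟩ := List.sublist_append_iff.1 hδ
  have hδ₂ : π δ₂ ∈ parabolic cs J :=
    (mem_parabolic_iff cs).2 ⟨δ₂, fun b hb => hνJ b (h₂.subset hb), rfl⟩
  have hcoset : (π (δ₁ ++ δ₂))⁻¹ * π δ₁ ∈ parabolic cs J := by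
    simpa [wordProd_append] using (parabolic cs J).inv_mem hδ₂
  rw [minRep_eq_minRep cs hcoset, ← hμ]
  exact (minRep_bruhatLE cs J _).trans (bruhatLE_wordProd_of_sublist cs
    (by simpa using hred.take μ.length) h₁)

end MinRep

theorem le_of_forall_minRep_le {ι : Type*} {Js : ι → Set B} {x y : W}
    (hx : minRep cs (⋂ i, Js i) x = x) (hy : minRep cs (⋂ i, Js i) y = y)
    (h : ∀ i, BruhatLE cs (minRep cs (Js i) x) (minRep cs (Js i) y)) : BruhatLE cs x y := by
  induction hn : ℓ y using Nat.strong_induction_on generalizing x y with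
  | _ n IH =>
  rcases eq_or_ne y 1 with rfl | hy1
  · have hxJ (i : ι) : x ∈ parabolic cs (Js i) := by
      have h1 := h i
      rw [(minRep_eq_one_iff cs).2 (one_mem _)] at h1
      exact (minRep_eq_one_iff cs).1 h1.eq_one
    rw [← hx, (minRep_eq_one_iff cs).2 (mem_parabolic_iInter cs hxJ)]
    exact .refl cs 1
  obtain ⟨b, hb⟩ := cs.exists_leftDescent_of_ne_one hy1
  have hy' := minRep_simple_mul_of_minRep_eq cs hy hb
  rcases lt_or_gt_of_ne (cs.length_simple_mul_ne x b) with hxb | hxb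
  · have hx' := minRep_simple_mul_of_minRep_eq cs hx hxb
    exact le_of_simple_mul_le_simple_mul cs (IH _ (hn ▸ hb) hx' hy'
      (fun i => minRep_simple_mul_le_minRep_simple_mul cs (h i) hxb) rfl) hb
  · exact (IH _ (hn ▸ hb) hx hy' (fun i => minRep_le_minRep_simple_mul cs (h i) hxb) rfl).trans
      (simple_mul_bruhatLE cs hb)

/-- Proposition: for a family `{J_i}` of subsets of `S`,
`x^{J_i} ≤ y^{J_i}` for all `i` iff `x^{∩_i J_i} ≤ y^{∩_i J_i}`. -/
theorem minRep_le_family_iff_inter {ι : Type*} (cs : CoxeterSystem M W)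
    (Js : ι → Set B) (x y : W) (mx my : ι → W) (mxK myK : W)
    (hmx : ∀ i, IsMinRep cs (Js i) x (mx i)) (hmy : ∀ i, IsMinRep cs (Js i) y (my i))
    (hmxK : IsMinRep cs (⋂ i, Js i) x mxK) (hmyK : IsMinRep cs (⋂ i, Js i) y myK) :
    (∀ i, BruhatLE cs (mx i) (my i)) ↔ BruhatLE cs mxK myK := by
  obtain rfl : mx = fun i => minRep cs (Js i) x := funext fun i => (hmx i).eq_minRep
  obtain rfl : my = fun i => minRep cs (Js i) y := funext fun i => (hmy i).eq_minRep
  obtain rfl := hmxK.eq_minRep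
  obtain rfl := hmyK.eq_minRep
  have hproj (i : ι) (z : W) :
      minRep cs (Js i) (minRep cs (⋂ i, Js i) z) = minRep cs (Js i) z :=
    minRep_eq_minRep cs (parabolic_mono cs (Set.iInter_subset Js i) (inv_mul_minRep_mem cs _ z))
  constructor
  · intro h
    exact le_of_forall_minRep_le cs (minRep_minRep cs x) (minRep_minRep cs y)
      fun i => by simpa only [hproj] using h i
  · intro h i
    simpa only [hproj] using minRep_mono cs (J := Js i) h

end Paper
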